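/- arXiv:1108.2515 — 3 statements merged into one kernel-verified Lean document; each statement's English description precedes it below -/
import Mathlib

section
/- Let (b_u)_{u≥0} be a normalized one-dimensional Brownian motion started at 0, let t > 0, a ≥ 0, and let x < y satisfy y < −a. Then W_0( sup_{u∈[0,t]} |b_u| ≥ a and b_t ∈ [x,y] ) ≤ 2Φ((2a−x)/√t) − 2Φ((2a−y)/√t) + Φ(−x/√t) − Φ(−y/√t). -/
/-! The event is contained in `{b_t ∈ [x, y]}`, and `b_t` is a centered Gaussian of variance `2t`,
so its probability is at most `Φ(y/√t) - Φ(x/√t) = Φ(-x/√t) - Φ(-y/√t)` by the symmetry of `Φ`.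
The reflection term `2Φ((2a-x)/√t) - 2Φ((2a-y)/√t)` is nonnegative since `Φ` is monotone. -/

open MeasureTheory ProbabilityTheory Real Set Filter
open scoped ENNReal NNReal

/-- A normalized one-dimensional Brownian motion started at `x`:
`b 0 = x` a.s., a.s. continuous paths on `[0,∞)`, independent increments, and
`b t - b s` Gaussian with mean `0` and variance `2 (t - s)`. -/
structure IsNormalizedBM {Ω : Type*} [MeasurableSpace Ω] (P : Measure Ω)
    (b : ℝ → Ω → ℝ) (x : ℝ) : Prop where
  isProb : IsProbabilityMeasure P
  start : ∀ᵐ ω ∂P, b 0 ω = x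
  meas : ∀ t, Measurable (b t)
  cont : ∀ᵐ ω ∂P, ContinuousOn (fun t => b t ω) (Set.Ici 0)
  incr : ∀ s t : ℝ, 0 ≤ s → s ≤ t →
    Measure.map (fun ω => b t ω - b s ω) P = gaussianReal 0 (Real.toNNReal (2 * (t - s)))
  indep : ∀ (n : ℕ) (t : Fin (n + 1) → ℝ), Monotone t → 0 ≤ t 0 →
    iIndepFun
      (fun i : Fin n => fun ω => b (t i.succ) ω - b (t i.castSucc) ω) P

/-- `Φ(x) = (4π)^{-1/2} ∫_{-∞}^x e^{-u²/4} du`, the cumulative distribution function of a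
centered Gaussian of variance 2. -/
noncomputable def Phi (z : ℝ) : ℝ :=
  (Real.sqrt (4 * Real.pi))⁻¹ * ∫ u in Set.Iio z, Real.exp (-u ^ 2 / 4)

lemma gaussianReal_singleton (μ : ℝ) {v : ℝ≥0} (hv : v ≠ 0) (x : ℝ) :
    gaussianReal μ v {x} = 0 :=
  gaussianReal_absolutelyContinuous μ hv (Real.volume_singleton)

lemma Phi_eq_cdf_gaussianReal : Phi = cdf (gaussianReal 0 2) := by
  ext z
  have hpdf : ∀ u, gaussianPDFReal 0 2 u = (√(4 * π))⁻¹ * exp (-u ^ 2 / 4) := fun u => by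
    simp only [gaussianPDFReal, NNReal.coe_ofNat, sub_zero]
    ring_nf
  rw [cdf_eq_real, ← measureReal_congr (Iio_ae_eq_Iic' (gaussianReal_singleton 0 two_ne_zero z)),
    measureReal_def, gaussianReal_apply_eq_integral 0 two_ne_zero,
    ENNReal.toReal_ofReal (integral_nonneg fun u => gaussianPDFReal_nonneg _ _ _), Phi]
  simp_rw [hpdf]
  exact (integral_const_mul _ _).symm

lemma Phi_mono : Monotone Phi :=
  Phi_eq_cdf_gaussianReal ▸ (cdf _).mono

lemma Phi_neg (z : ℝ) : Phi (-z) = 1 - Phi z := by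
  have hsymm : (gaussianReal 0 2).map (fun u => -u) = gaussianReal 0 2 := by
    rw [gaussianReal_map_neg, neg_zero]
  rw [Phi_eq_cdf_gaussianReal, cdf_eq_real, cdf_eq_real, ← hsymm,
    map_measureReal_apply measurable_neg measurableSet_Iic, hsymm, neg_preimage, neg_Iic, neg_neg,
    ← compl_Iio, measureReal_compl measurableSet_Iio, probReal_univ,
    measureReal_congr (Iio_ae_eq_Iic' (gaussianReal_singleton 0 two_ne_zero z))]

lemma gaussianReal_real_Icc {x y : ℝ} (hxy : x ≤ y) :
    (gaussianReal 0 2).real (Icc x y) = Phi y - Phi x := by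
  have hIoc := (cdf (gaussianReal 0 2)).measure_Ioc x y
  rw [measure_cdf] at hIoc
  rw [← measureReal_congr (Ioc_ae_eq_Icc' (gaussianReal_singleton 0 two_ne_zero x)),
    Phi_eq_cdf_gaussianReal, measureReal_def, hIoc,
    ENNReal.toReal_ofReal (sub_nonneg.2 ((cdf _).mono hxy))]

lemma gaussianReal_real_Icc_of_var {t x y : ℝ} (ht : 0 < t) (hxy : x ≤ y) :
    (gaussianReal 0 (2 * t).toNNReal).real (Icc x y) = Phi (y / √t) - Phi (x / √t) := by
  have hscale : gaussianReal 0 (2 * t).toNNReal = (gaussianReal 0 2).map (√t * ·) := by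
    rw [gaussianReal_map_const_mul, mul_zero]
    congr 1
    ext
    simp [Real.sq_sqrt ht.le, mul_comm, ht.le]
  rw [hscale, map_measureReal_apply (measurable_const_mul _) measurableSet_Icc,
    preimage_const_mul_Icc₀ _ _ (sqrt_pos.2 ht), gaussianReal_real_Icc (by gcongr)]

lemma IsNormalizedBM.map_eq_gaussianReal {Ω : Type*} [MeasurableSpace Ω] {P : Measure Ω}
    {b : ℝ → Ω → ℝ} {z : ℝ} (hb : IsNormalizedBM P b z) {t : ℝ} (ht : 0 ≤ t) :
    P.map (b t) = gaussianReal z (2 * t).toNNReal := by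
  have hshift : b t =ᵐ[P] (· + z) ∘ fun ω => b t ω - b 0 ω :=
    hb.start.mono fun ω h => by simp [h]
  rw [Measure.map_congr hshift,
    ← Measure.map_map (f := fun ω => b t ω - b 0 ω) (measurable_add_const z)
      ((hb.meas t).sub (hb.meas 0)),
    hb.incr 0 t le_rfl ht, sub_zero, gaussianReal_map_add_const, zero_add]

theorem bm_sup_abs_interval_R2_general {Ω : Type*} [MeasurableSpace Ω] (P : Measure Ω)
    (b : ℝ → Ω → ℝ) (hb : IsNormalizedBM P b 0) (t : ℝ) (ht : 0 < t)
    (a x y : ℝ) (hxy : x < y) :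
    (P {ω | (a ≤ ⨆ u : Set.Icc (0 : ℝ) t, |b u.1 ω|) ∧ b t ω ∈ Set.Icc x y}).toReal
      ≤ 2 * Phi ((2 * a - x) / Real.sqrt t) - 2 * Phi ((2 * a - y) / Real.sqrt t)
        + Phi (-x / Real.sqrt t) - Phi (-y / Real.sqrt t) := by
  have := hb.isProb
  have hlaw : P.real {ω | b t ω ∈ Icc x y} = Phi (y / √t) - Phi (x / √t) := by
    rw [← gaussianReal_real_Icc_of_var ht hxy.le, ← hb.map_eq_gaussianReal ht.le,
      map_measureReal_apply (hb.meas t) measurableSet_Icc]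
    rfl
  have hmono := Phi_mono (show (2 * a - y) / √t ≤ (2 * a - x) / √t by gcongr)
  calc P.real {ω | (a ≤ ⨆ u : Icc (0 : ℝ) t, |b u.1 ω|) ∧ b t ω ∈ Icc x y}
      ≤ P.real {ω | b t ω ∈ Icc x y} := measureReal_mono fun ω hω => hω.2
    _ = Phi (-x / √t) - Phi (-y / √t) := by rw [hlaw, neg_div, neg_div, Phi_neg, Phi_neg]; ring
    _ ≤ _ := by linarith

/-- Region `R₂ = {x < y < -a}` of Lemma `FiCases`:
`W_0 (sup_{u∈[0,t]} |b_u| ≥ a and b_t ∈ [x,y]) ≤ 2Φ((2a-x)/√t) - 2Φ((2a-y)/√t) + Φ(-x/√t) - Φ(-y/√t)`. -/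
theorem bm_sup_abs_interval_R2 {Ω : Type*} [MeasurableSpace Ω] (P : Measure Ω)
    (b : ℝ → Ω → ℝ) (hb : IsNormalizedBM P b 0) (t : ℝ) (ht : 0 < t)
    (a x y : ℝ) (ha : 0 ≤ a) (hxy : x < y) (hya : y < -a) :
    (P {ω | (a ≤ ⨆ u : Set.Icc (0 : ℝ) t, |b u.1 ω|) ∧ b t ω ∈ Set.Icc x y}).toReal
      ≤ 2 * Phi ((2 * a - x) / Real.sqrt t) - 2 * Phi ((2 * a - y) / Real.sqrt t)
        + Phi (-x / Real.sqrt t) - Phi (-y / Real.sqrt t) :=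
  bm_sup_abs_interval_R2_general P b hb t ht a x y hxy
end

section
/- Let s < t and let Ψ : [s,t] → Mat_n(ℝ) be continuous of the form Ψ(u) = L(u) D(u), where each L(u) is lower triangular with all diagonal entries equal to 1 and each D(u) is diagonal with nonnegative diagonal entries d₁(u), …, d_n(u), with L and D depending continuously on u. Then det( ∫ₛᵗ Ψ(u) Ψ(u)ᵀ du ) ≥ ∏_{i=1}^{n} ∫ₛᵗ d_i(u)² du. -/
/-!
With `ψₖ(u) = dₖ(u) L(u) eₖ` the `k`-th column of `Ψ(u)`, the covariance matrix is `∑ₖ Mₖ` with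
`Mₖ = ∫ ψₖ ψₖᵀ`. Each `Mₖ` is positive semidefinite, vanishes outside the rows and columns `≥ k`
(because `L(u)` is lower triangular) and has `(k, k)` entry `∫ dₖ²` (because `L(u)` has unit
diagonal). For such a family and any positive semidefinite `N`, the `(0, 0)` entry of
`N + ∑ₖ Mₖ` is at least `M₀(0, 0)`, and its Schur complement is again of the form
`N' + ∑ₖ M'ₖ`, with `N'` the Schur complement of `N + M₀` and `M'ₖ` the matrix `Mₖ₊₁` with row
and column `0` removed. Induction on the dimension gives `det (N + ∑ₖ Mₖ) ≥ ∏ₖ Mₖ(k, k)`.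
-/

open MeasureTheory Set Matrix

def sumUnitEquivFinSucc (n : ℕ) : Fin n ⊕ Unit ≃ Fin (n + 1) :=
  ((finSuccEquiv n).trans (Equiv.optionEquivSumPUnit (Fin n))).symm

namespace Matrix

variable {K : Type*} [Field K] {n : ℕ}

noncomputable def schurFirst (A : Matrix (Fin (n + 1)) (Fin (n + 1)) K) :
    Matrix (Fin n) (Fin n) K :=
  of fun i j => A i.succ j.succ - A i.succ 0 * A 0 j.succ / A 0 0

lemma submatrix_sumUnitEquivFinSucc (A : Matrix (Fin (n + 1)) (Fin (n + 1)) K) :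
    A.submatrix (sumUnitEquivFinSucc n) (sumUnitEquivFinSucc n) =
      fromBlocks (A.submatrix Fin.succ Fin.succ) (of fun i _ => A i.succ 0)
        (of fun _ j => A 0 j.succ) (diagonal fun _ => A 0 0) := by
  ext (i | i) (j | j) <;> simp [sumUnitEquivFinSucc]

lemma diagonal_mul_diagonal_inv_unit {a : K} (h : a ≠ 0) :
    (diagonal fun _ : Unit => a) * diagonal (fun _ => a⁻¹) = 1 := by
  simp [h]

theorem det_eq_mul_det_schurFirst (A : Matrix (Fin (n + 1)) (Fin (n + 1)) K) (h : A 0 0 ≠ 0) :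
    A.det = A 0 0 * A.schurFirst.det := by
  let := invertibleOfRightInverse _ _ (diagonal_mul_diagonal_inv_unit h)
  rw [← det_submatrix_equiv_self (sumUnitEquivFinSucc n), submatrix_sumUnitEquivFinSucc,
    det_fromBlocks₂₂, invOf_eq_right_inv (diagonal_mul_diagonal_inv_unit h)]
  congr 1
  · simp
  · congr 1
    ext i j
    simp [schurFirst, mul_apply, div_eq_mul_inv, mul_right_comm]

theorem PosSemidef.schurFirst {A : Matrix (Fin (n + 1)) (Fin (n + 1)) ℝ}
    (hA : A.PosSemidef) (h : 0 < A 0 0) : A.schurFirst.PosSemidef := by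
  let := invertibleOfRightInverse _ _ (diagonal_mul_diagonal_inv_unit h.ne')
  have hsymm (i j) : A j i = A i j := by simpa using hA.1.apply i j
  let b : Matrix (Fin n) Unit ℝ := of fun i _ => A i.succ 0
  let p : Matrix Unit Unit ℝ := diagonal fun _ => (A 0 0)⁻¹
  have hrow : (of fun _ j => A 0 j.succ : Matrix Unit (Fin n) ℝ) = bᴴ := by
    ext _ j
    simp [b, hsymm]
  have hschur : A.schurFirst = A.submatrix Fin.succ Fin.succ - b * p * bᴴ := by
    ext i j
    simp [Matrix.schurFirst, b, p, mul_apply, div_eq_mul_inv, hsymm, mul_right_comm]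
  have hblocks := hA.submatrix (sumUnitEquivFinSucc n)
  rwa [submatrix_sumUnitEquivFinSucc, hrow,
    PosDef.fromBlocks₂₂ _ _ (posDef_diagonal_iff.2 fun _ => h),
    inv_eq_right_inv (diagonal_mul_diagonal_inv_unit h.ne'), ← hschur] at hblocks

theorem schurFirst_add_of_row_col_zero (A B : Matrix (Fin (n + 1)) (Fin (n + 1)) K)
    (hrow : ∀ j, B 0 j = 0) (hcol : ∀ i, B i 0 = 0) :
    (A + B).schurFirst = A.schurFirst + B.submatrix Fin.succ Fin.succ := by
  ext i j
  simp [schurFirst, hrow, hcol, add_sub_right_comm]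

end Matrix

theorem prod_diag_le_det_add_sum {n : ℕ} {N : Matrix (Fin n) (Fin n) ℝ}
    {M : Fin n → Matrix (Fin n) (Fin n) ℝ} (hN : N.PosSemidef) (hM : ∀ k, (M k).PosSemidef)
    (hsupp : ∀ k i j, i < k → M k i j = 0) :
    ∏ k, M k k k ≤ (N + ∑ k, M k).det := by
  induction n with
  | zero => simp
  | succ n ih =>
    set P := N + M 0
    set R := ∑ k : Fin n, M k.succ
    have hrow (j) : R 0 j = 0 := by simp [R, Matrix.sum_apply, hsupp _ 0 j (Fin.succ_pos _)]
    have hcol (i) : R i 0 = 0 := by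
      refine (Matrix.sum_apply _ _ _ _).trans (Finset.sum_eq_zero fun k _ => ?_)
      simpa [hsupp k.succ 0 i k.succ_pos] using (hM k.succ).1.apply 0 i
    have hPR : (P + R).PosSemidef := by
      simpa only [P, R, add_assoc, ← Fin.sum_univ_succ] using
        hN.add (posSemidef_sum _ fun k _ => hM k)
    have hpiv : M 0 0 0 ≤ P 0 0 := le_add_of_nonneg_left hN.diag_nonneg
    rw [Fin.sum_univ_succ, ← add_assoc, Fin.prod_univ_succ]
    rcases (hM 0).diag_nonneg.eq_or_lt with h0 | hpos
    · rw [← h0, zero_mul]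
      exact hPR.det_nonneg
    have hPpos : 0 < P 0 0 := hpos.trans_le hpiv
    have hpivPR : (P + R) 0 0 = P 0 0 := by rw [Matrix.add_apply, hrow, add_zero]
    have hsub : R.submatrix Fin.succ Fin.succ =
        ∑ k : Fin n, (M k.succ).submatrix Fin.succ Fin.succ := by
      ext i j
      simp [R, Matrix.sum_apply]
    rw [det_eq_mul_det_schurFirst _ (hpivPR ▸ hPpos.ne'), hpivPR,
      schurFirst_add_of_row_col_zero _ _ hrow hcol, hsub]
    refine mul_le_mul hpiv (ih ((hN.add (hM 0)).schurFirst hPpos)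
      (fun k => (hM k.succ).submatrix _) fun k i j hij => hsupp _ _ _ (Fin.succ_lt_succ_iff.2 hij))
      (Finset.prod_nonneg fun k _ => (hM k.succ).diag_nonneg) hPpos.le

theorem posSemidef_intervalIntegral_gram {ι : Type*} [Fintype ι] {s t : ℝ} (hst : s ≤ t)
    {ψ : ℝ → ι → ℝ} (hψ : ∀ i j, IntervalIntegrable (fun u => ψ u i * ψ u j) volume s t) :
    (of fun i j => ∫ u in s..t, ψ u i * ψ u j).PosSemidef := by
  refine .of_dotProduct_mulVec_nonneg ?_ fun x => ?_
  · ext i j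
    simp [mul_comm]
  have hint (i j) : IntervalIntegrable (fun u => x i * ψ u i * (x j * ψ u j)) volume s t := by
    simpa [mul_mul_mul_comm] using (hψ i j).const_mul (x i * x j)
  have hquad : ∫ u in s..t, (∑ i, x i * ψ u i) ^ 2
      = star x ⬝ᵥ ((of fun i j => ∫ u in s..t, ψ u i * ψ u j) *ᵥ x) :=
    calc ∫ u in s..t, (∑ i, x i * ψ u i) ^ 2
        = ∫ u in s..t, ∑ i, ∑ j, x i * ψ u i * (x j * ψ u j) := by
          simp_rw [sq, Finset.sum_mul_sum]
      _ = ∑ i, ∑ j, ∫ u in s..t, x i * ψ u i * (x j * ψ u j) := by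
          rw [intervalIntegral.integral_finsetSum fun i _ => by
            simpa only [Finset.sum_fn] using IntervalIntegrable.sum _ fun j _ => hint i j]
          simp_rw [intervalIntegral.integral_finsetSum fun j _ => hint _ j]
      _ = ∑ i, ∑ j, x i * ((∫ u in s..t, ψ u i * ψ u j) * x j) := by
          refine Finset.sum_congr rfl fun i _ => Finset.sum_congr rfl fun j _ => ?_
          rw [← intervalIntegral.integral_mul_const, ← intervalIntegral.integral_const_mul]
          congr 1 with u
          ring
      _ = star x ⬝ᵥ ((of fun i j => ∫ u in s..t, ψ u i * ψ u j) *ᵥ x) := by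
          simp [dotProduct, mulVec, Finset.mul_sum]
  rw [← hquad]
  exact intervalIntegral.integral_nonneg hst fun u _ => sq_nonneg _

theorem mul_diagonal_mul_transpose_apply {m l R : Type*} [Fintype l] [DecidableEq l]
    [CommSemiring R] (L : Matrix m l R) (d : l → R) (i j : m) :
    (L * diagonal d * (L * diagonal d)ᵀ) i j = ∑ k, L i k * d k * (L j k * d k) := by
  simp [mul_apply, diagonal_apply, mul_comm (d _)]

theorem covariance_det_lower_bound_general {n : ℕ} (s t : ℝ) (hst : s < t)
    (L : ℝ → Matrix (Fin n) (Fin n) ℝ) (d : ℝ → Fin n → ℝ)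
    (hL : ContinuousOn L (Set.Icc s t)) (hd : ContinuousOn d (Set.Icc s t))
    (hLlow : ∀ u ∈ Set.Icc s t, ∀ i j : Fin n, i < j → L u i j = 0)
    (hLdiag : ∀ u ∈ Set.Icc s t, ∀ i, L u i i = 1) :
    (∏ i, ∫ u in s..t, d u i ^ 2)
      ≤ (Matrix.of fun i j => ∫ u in s..t,
          ((L u * Matrix.diagonal (d u)) * (L u * Matrix.diagonal (d u))ᵀ) i j).det := by
  have hIcc : uIcc s t = Icc s t := uIcc_of_le hst.le
  let ψ : Fin n → ℝ → Fin n → ℝ := fun k u i => L u i k * d u k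
  have hint (k i j) : IntervalIntegrable (fun u => ψ k u i * ψ k u j) volume s t :=
    ContinuousOn.intervalIntegrable (by rw [hIcc]; fun_prop)
  let M (k : Fin n) : Matrix (Fin n) (Fin n) ℝ := of fun i j => ∫ u in s..t, ψ k u i * ψ k u j
  have hsum : (of fun i j => ∫ u in s..t,
      ((L u * diagonal (d u)) * (L u * diagonal (d u))ᵀ) i j) = 0 + ∑ k, M k := by
    ext i j
    simp only [mul_diagonal_mul_transpose_apply, zero_add, Matrix.sum_apply, of_apply, M]
    exact intervalIntegral.integral_finsetSum fun k _ => hint k i j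
  have hdiag (k) : M k k k = ∫ u in s..t, d u k ^ 2 :=
    intervalIntegral.integral_congr fun u hu => by simp [ψ, hLdiag u (hIcc ▸ hu), sq]
  have hsupp (k i j) (hik : i < k) : M k i j = 0 :=
    (intervalIntegral.integral_congr (g := fun _ => 0)
      fun u hu => by simp [ψ, hLlow u (hIcc ▸ hu) i k hik]).trans intervalIntegral.integral_zero
  calc ∏ i, ∫ u in s..t, d u i ^ 2 = ∏ k, M k k k := by simp only [hdiag]
    _ ≤ (0 + ∑ k, M k).det :=
      prod_diag_le_det_add_sum .zero
        (fun k => posSemidef_intervalIntegral_gram hst.le (hint k)) hsupp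
    _ = _ := by rw [hsum]

/-- If `Ψ(u) = L(u) D(u)` with `L(u)` lower triangular with unit diagonal and
`D(u) = diag (d₁(u), …, d_n(u))` with nonnegative entries, all depending continuously on
`u ∈ [s,t]`, then `det (∫ₛᵗ Ψ(u) Ψ(u)ᵀ du) ≥ ∏ᵢ ∫ₛᵗ dᵢ(u)² du`. -/
theorem covariance_det_lower_bound {n : ℕ} (s t : ℝ) (hst : s < t)
    (L : ℝ → Matrix (Fin n) (Fin n) ℝ) (d : ℝ → Fin n → ℝ)
    (hL : ContinuousOn L (Set.Icc s t)) (hd : ContinuousOn d (Set.Icc s t))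
    (hLlow : ∀ u ∈ Set.Icc s t, ∀ i j : Fin n, i < j → L u i j = 0)
    (hLdiag : ∀ u ∈ Set.Icc s t, ∀ i, L u i i = 1)
    (hdnn : ∀ u ∈ Set.Icc s t, ∀ i, 0 ≤ d u i) :
    (∏ i, ∫ u in s..t, d u i ^ 2)
      ≤ (Matrix.of fun i j => ∫ u in s..t,
          ((L u * Matrix.diagonal (d u)) * (L u * Matrix.diagonal (d u))ᵀ) i j).det :=
  covariance_det_lower_bound_general s t hst L d hL hd hLlow hLdiag
end

section
/- Let k₀ be a nonnegative integer, t > 0, and let X : [0,t] → Mat_n(ℝ) and S : [0,t] → Mat_n(ℝ) be continuous, where X(u)^{k₀+1} = 0 for every u and each S(u) is diagonal with nonnegative diagonal entries s₁(u), …, s_n(u). Then there exists a constant C > 0, depending only on n and k₀, such that ‖ ∫₀ᵗ e^{X(u)} S(u) S(u)ᵀ e^{X(u)ᵀ} du ‖ ≤ C (1 + sup_{0≤u≤t} ‖X(u)‖)^{2k₀} Σ_{j=1}^{n} ∫₀ᵗ s_j(u)² du, where ‖·‖ is the ℓ²→ℓ² operator norm. -/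
open MeasureTheory ProbabilityTheory Real Set Filter Matrix
open scoped ENNReal NNReal

noncomputable def l2OpNorm {n : ℕ} (M : Matrix (Fin n) (Fin n) ℝ) : ℝ :=
  ‖LinearMap.toContinuousLinearMap (Matrix.toEuclideanLin M)‖

/-!
Since `X ^ (k₀ + 1) = 0`, the exponential `e^X` is the truncated series `∑_{m ≤ k₀} X^m / m!`,
so in any submultiplicative norm with `‖1‖ ≤ 1`, such as the `ℓ²` operator norm,
`‖e^X‖ ≤ (k₀ + 1)(1 + ‖X‖)^k₀`. Hence the integrand has norm at most
`‖e^X‖² ‖S‖² ≤ (k₀ + 1)² (1 + B)^{2k₀} ∑ⱼ sⱼ²`, where `B = sup ‖X‖`. The entrywise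
integral is the Bochner integral in the normed space of matrices with the `ℓ²` operator norm,
so its norm is at most the integral of the norm: `C = (k₀ + 1)²`.
-/

theorem NormedSpace.exp_eq_sum_range_of_pow_eq_zero (𝕂 : Type*) {𝔸 : Type*} [Field 𝕂] [CharZero 𝕂]
    [Ring 𝔸] [Algebra 𝕂 𝔸] [TopologicalSpace 𝔸] [IsTopologicalRing 𝔸] {x : 𝔸} {k : ℕ}
    (hx : x ^ k = 0) :
    NormedSpace.exp x = ∑ m ∈ Finset.range k, (m.factorial⁻¹ : 𝕂) • x ^ m := by
  rw [NormedSpace.exp_eq_tsum 𝕂]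
  refine tsum_eq_sum fun m hm => ?_
  rw [pow_eq_zero_of_le (by simpa using hm) hx, smul_zero]

theorem norm_pow_le_of_norm_one_le {𝔸 : Type*} [SeminormedRing 𝔸] (h1 : ‖(1 : 𝔸)‖ ≤ 1)
    (x : 𝔸) : ∀ m : ℕ, ‖x ^ m‖ ≤ ‖x‖ ^ m
  | 0 => by simpa using h1
  | m + 1 => norm_pow_le' x m.succ_pos

theorem NormedSpace.norm_exp_le_of_pow_eq_zero {𝔸 : Type*} [NormedRing 𝔸] [NormedAlgebra ℝ 𝔸]
    (h1 : ‖(1 : 𝔸)‖ ≤ 1) {x : 𝔸} {k : ℕ} (hx : x ^ (k + 1) = 0) :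
    ‖NormedSpace.exp x‖ ≤ (k + 1) * (1 + ‖x‖) ^ k := by
  rw [NormedSpace.exp_eq_sum_range_of_pow_eq_zero ℝ hx]
  calc ‖∑ m ∈ Finset.range (k + 1), (m.factorial⁻¹ : ℝ) • x ^ m‖
      ≤ ∑ m ∈ Finset.range (k + 1), ‖(m.factorial⁻¹ : ℝ) • x ^ m‖ := norm_sum_le _ _
    _ ≤ ∑ m ∈ Finset.range (k + 1), (1 + ‖x‖) ^ k := by
      refine Finset.sum_le_sum fun m hm => ?_
      have hfact : (m.factorial⁻¹ : ℝ) ≤ 1 := inv_le_one_of_one_le₀ (mod_cast m.factorial_pos)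
      calc ‖(m.factorial⁻¹ : ℝ) • x ^ m‖ = (m.factorial⁻¹ : ℝ) * ‖x ^ m‖ := by
            rw [norm_smul, Real.norm_of_nonneg (by positivity)]
        _ ≤ 1 * ‖x‖ ^ m := by gcongr; exact norm_pow_le_of_norm_one_le h1 x m
        _ ≤ (1 + ‖x‖) ^ k := by
            have hx1 : 1 ≤ 1 + ‖x‖ := le_add_of_nonneg_right (norm_nonneg x)
            rw [one_mul]
            exact (pow_le_pow_left₀ (norm_nonneg x) (by linarith) m).trans
              (pow_le_pow_right₀ hx1 (Nat.lt_succ_iff.1 (Finset.mem_range.1 hm)))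
    _ = (k + 1) * (1 + ‖x‖) ^ k := by simp

theorem le_ciSup_Icc_of_continuousOn {f : ℝ → ℝ} {a b : ℝ} (hf : ContinuousOn f (Icc a b))
    {u : ℝ} (hu : u ∈ Icc a b) : f u ≤ ⨆ v : Icc a b, f v := by
  refine le_ciSup (f := fun v : Icc a b => f v) ?_ ⟨u, hu⟩
  rw [← image_eq_range]
  exact (isCompact_Icc.image_of_continuousOn hf).bddAbove

namespace Matrix

open scoped Matrix.Norms.L2Operator

variable {𝕜 m n : Type*} [RCLike 𝕜] [Fintype m] [Fintype n] [DecidableEq n]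

theorem l2_opNorm_one_le : ‖(1 : Matrix n n 𝕜)‖ ≤ 1 := by
  rw [← diagonal_one, l2_opNorm_diagonal]
  exact (pi_norm_le_iff_of_nonneg zero_le_one).2 fun _ => norm_one.le

theorem l2_opNorm_diagonal_sq_le_sum (s : n → ℝ) : ‖diagonal s‖ ^ 2 ≤ ∑ j, s j ^ 2 := by
  have hs : ‖s‖ ≤ √(∑ j, s j ^ 2) := (pi_norm_le_iff_of_nonneg (sqrt_nonneg _)).2 fun j =>
    Real.abs_le_sqrt (Finset.single_le_sum (fun i _ => sq_nonneg (s i)) (Finset.mem_univ j))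
  rw [l2_opNorm_diagonal]
  calc ‖s‖ ^ 2 ≤ √(∑ j, s j ^ 2) ^ 2 := by gcongr
    _ = ∑ j, s j ^ 2 := sq_sqrt (Finset.sum_nonneg fun j _ => sq_nonneg (s j))

theorem l2_opNorm_mul_diagonal_mul_transpose_le (A : Matrix n n ℝ) (s : n → ℝ) :
    ‖A * diagonal s * (diagonal s)ᵀ * Aᵀ‖ ≤ ‖A‖ ^ 2 * ∑ j, s j ^ 2 := by
  have hT : ∀ B : Matrix n n ℝ, ‖Bᵀ‖ = ‖B‖ := fun B => by
    rw [← conjTranspose_eq_transpose_of_trivial, l2_opNorm_conjTranspose]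
  calc ‖A * diagonal s * (diagonal s)ᵀ * Aᵀ‖
      ≤ ‖A‖ * ‖diagonal s‖ * ‖(diagonal s)ᵀ‖ * ‖Aᵀ‖ := by
        grw [norm_mul_le, norm_mul_le, norm_mul_le]
    _ = ‖A‖ ^ 2 * ‖diagonal s‖ ^ 2 := by rw [hT, hT]; ring
    _ ≤ ‖A‖ ^ 2 * ∑ j, s j ^ 2 := by gcongr; exact l2_opNorm_diagonal_sq_le_sum s

theorem l2_opNorm_intervalIntegral_apply {f : ℝ → Matrix m n ℝ} {a b : ℝ}
    (hf : IntervalIntegrable f volume a b) (i : m) (j : n) :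
    (∫ u in a..b, f u) i j = ∫ u in a..b, f u i j :=
  ((LinearMap.toContinuousLinearMap (entryLinearMap ℝ ℝ i j)).intervalIntegral_comp_comm
    hf).symm

end Matrix

open scoped Matrix.Norms.L2Operator in
theorem Matrix.continuous_exp {𝕜 n : Type*} [RCLike 𝕜] [Fintype n] [DecidableEq n] :
    Continuous (NormedSpace.exp : Matrix n n 𝕜 → Matrix n n 𝕜) :=
  continuous_iff_continuousAt.2 fun x => (NormedSpace.exp_analytic (𝕂 := 𝕜) x).continuousAt

/- Stated outside the scope `Matrix.Norms.L2Operator`, so that `exp` and continuity refer to the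
product topology on matrices, as in the theorem. -/
section l2OpNorm

variable {n : ℕ}

open scoped Matrix.Norms.L2Operator in
theorem l2OpNorm_eq_norm (M : Matrix (Fin n) (Fin n) ℝ) : l2OpNorm M = ‖M‖ := rfl

theorem l2OpNorm_nonneg (M : Matrix (Fin n) (Fin n) ℝ) : 0 ≤ l2OpNorm M := norm_nonneg _

open scoped Matrix.Norms.L2Operator in
theorem continuous_l2OpNorm : Continuous (l2OpNorm : Matrix (Fin n) (Fin n) ℝ → ℝ) :=
  continuous_norm

open scoped Matrix.Norms.L2Operator in
theorem l2OpNorm_exp_le_of_pow_eq_zero {X : Matrix (Fin n) (Fin n) ℝ} {k : ℕ}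
    (hX : X ^ (k + 1) = 0) : l2OpNorm (NormedSpace.exp X) ≤ (k + 1) * (1 + l2OpNorm X) ^ k :=
  NormedSpace.norm_exp_le_of_pow_eq_zero Matrix.l2_opNorm_one_le hX

open scoped Matrix.Norms.L2Operator in
theorem l2OpNorm_mul_diagonal_mul_transpose_le (A : Matrix (Fin n) (Fin n) ℝ) (s : Fin n → ℝ) :
    l2OpNorm (A * diagonal s * (diagonal s)ᵀ * Aᵀ) ≤ l2OpNorm A ^ 2 * ∑ j, s j ^ 2 :=
  Matrix.l2_opNorm_mul_diagonal_mul_transpose_le A s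

theorem l2OpNorm_of_intervalIntegral_le {f : ℝ → Matrix (Fin n) (Fin n) ℝ} {g : ℝ → ℝ} {a b : ℝ}
    (hab : a ≤ b) (hf : ContinuousOn f (Icc a b)) (hg : IntervalIntegrable g volume a b)
    (hfg : ∀ u ∈ Icc a b, l2OpNorm (f u) ≤ g u) :
    l2OpNorm (of fun i j => ∫ u in a..b, f u i j) ≤ ∫ u in a..b, g u := by
  open scoped Matrix.Norms.L2Operator in
  have hf_int : IntervalIntegrable f volume a b := by
    rw [← uIcc_of_le hab] at hf; exact hf.intervalIntegrable
  have hof : (of fun i j => ∫ u in a..b, f u i j) = ∫ u in a..b, f u := by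
    ext i j
    exact (Matrix.l2_opNorm_intervalIntegral_apply hf_int i j).symm
  rw [l2OpNorm_eq_norm, hof]
  exact intervalIntegral.norm_integral_le_of_norm_le hab
    (ae_of_all _ fun u hu => l2OpNorm_eq_norm (f u) ▸ hfg u (Ioc_subset_Icc_self hu)) hg

end l2OpNorm

/-- Operator-norm bound for the covariance matrix
`∫₀ᵗ e^{X(u)} S(u) S(u)ᵀ e^{X(u)ᵀ} du`, where each `X(u)` is nilpotent of order `k₀ + 1` and
each `S(u)` is diagonal with nonnegative entries `s₁(u), …, s_n(u)`:
`‖∫₀ᵗ e^{X(u)} S(u) S(u)ᵀ e^{X(u)ᵀ} du‖ ≤ C (1 + sup_{0≤u≤t} ‖X(u)‖)^{2k₀} ∑ⱼ ∫₀ᵗ sⱼ(u)² du`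
with `C` depending only on `n` and `k₀`. -/
theorem covariance_opnorm_bound (n k₀ : ℕ) :
    ∃ C : ℝ, 0 < C ∧ ∀ t : ℝ, 0 < t →
      ∀ (X : ℝ → Matrix (Fin n) (Fin n) ℝ) (S : ℝ → Fin n → ℝ),
        ContinuousOn X (Set.Icc 0 t) → ContinuousOn S (Set.Icc 0 t) →
        (∀ u ∈ Set.Icc (0 : ℝ) t, X u ^ (k₀ + 1) = 0) →
        (∀ u ∈ Set.Icc (0 : ℝ) t, ∀ i, 0 ≤ S u i) →
        l2OpNorm (Matrix.of fun i j => ∫ u in (0 : ℝ)..t,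
            (NormedSpace.exp (X u) * Matrix.diagonal (S u) * (Matrix.diagonal (S u))ᵀ *
              (NormedSpace.exp (X u))ᵀ) i j)
          ≤ C * (1 + ⨆ u : Set.Icc (0 : ℝ) t, l2OpNorm (X u.1)) ^ (2 * k₀) *
            ∑ j, ∫ u in (0 : ℝ)..t, S u j ^ 2 := by
  refine ⟨(k₀ + 1) ^ 2, by positivity, fun t ht X S hX hS hnil _ => ?_⟩
  set B := ⨆ u : Icc (0 : ℝ) t, l2OpNorm (X u.1)
  have hXB : ∀ u ∈ Icc 0 t, l2OpNorm (X u) ≤ B := fun u hu =>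
    le_ciSup_Icc_of_continuousOn (continuous_l2OpNorm.comp_continuousOn hX) hu
  have hexp : ∀ u ∈ Icc 0 t, l2OpNorm (NormedSpace.exp (X u)) ≤ (k₀ + 1) * (1 + B) ^ k₀ :=
    fun u hu => (l2OpNorm_exp_le_of_pow_eq_zero (hnil u hu)).trans <| by
      gcongr
      exacts [add_nonneg zero_le_one (l2OpNorm_nonneg _), hXB u hu]
  have hexpc : ContinuousOn (fun u => NormedSpace.exp (X u)) (Icc 0 t) :=
    Matrix.continuous_exp.comp_continuousOn hX
  have hS2 : ∀ j, IntervalIntegrable (fun u => S u j ^ 2) volume 0 t := fun j =>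
    ContinuousOn.intervalIntegrable (by rw [uIcc_of_le ht.le]; fun_prop)
  calc _ ≤ ∫ u in (0 : ℝ)..t, ((k₀ + 1) * (1 + B) ^ k₀) ^ 2 * ∑ j, S u j ^ 2 := by
        refine l2OpNorm_of_intervalIntegral_le ht.le (by fun_prop) ?_ fun u hu =>
          (l2OpNorm_mul_diagonal_mul_transpose_le _ _).trans ?_
        · exact ContinuousOn.intervalIntegrable (by rw [uIcc_of_le ht.le]; fun_prop)
        · gcongr
          exacts [l2OpNorm_nonneg _, hexp u hu]
    _ = _ := by
        rw [intervalIntegral.integral_const_mul,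
          intervalIntegral.integral_finsetSum fun j _ => hS2 j]
        ring
end
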